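/- arXiv:2208.04301 — 4 statements merged into one kernel-verified Lean document; each statement's English description precedes it below -/
import Mathlib

section
/- For any symmetric positive definite kernel k, the β^k-indicator is bounded: 0 ≤ β^k_R ≤ 1 for every subset R of input indices, and β^k of the full input set equals 1 when the output is a deterministic function of all inputs. -/
open MeasureTheory
open scoped RealInnerProductSpace

/-- The β^k-indicator of the group of inputs with σ-algebra `m`:
`β^k_R = (E[‖μ_{Y|X_R}‖²] − ‖μ_Y‖²) / (E[k(Y,Y)] − ‖μ_Y‖²)`, where `Z ω = k(·,Y(ω))`
is the feature map of the output, `μ[Z|m]` is the conditional mean embedding and the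
numerator equals `E_{X_R}[MMD²[f_Y, f_{Y|X_R}, k]]` (tower identity). -/
noncomputable def betaIndicator {Ω H : Type*} (m0 : MeasurableSpace Ω)
    [NormedAddCommGroup H] [InnerProductSpace ℝ H] [CompleteSpace H]
    (μ : @MeasureTheory.Measure Ω m0) (Z : Ω → H) (m : MeasurableSpace Ω) : ℝ :=
  ((∫ ω, ‖(μ[Z|m]) ω‖ ^ 2 ∂μ) - ‖∫ ω', Z ω' ∂μ‖ ^ 2) /
    ((∫ ω, ‖Z ω‖ ^ 2 ∂μ) - ‖∫ ω', Z ω' ∂μ‖ ^ 2)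

/-!
Both bounds are the `L²`-contraction property of conditional expectation,
`E‖E[Z|m]‖² ≤ E‖Z‖²`: applied to `Z` itself it bounds the numerator by the denominator, and
applied to `E[Z|m]` with the trivial σ-algebra, whose conditional expectation is the constant
`E[Z]`, it shows that the numerator is nonnegative. On the full σ-algebra `E[Z|m0] = Z`.
-/

namespace MeasureTheory

variable {Ω E : Type*} {m m0 : MeasurableSpace Ω} {μ : Measure Ω}
  [NormedAddCommGroup E] [NormedSpace ℝ E] [CompleteSpace E]

theorem integral_sq_norm_condExp_le {f : Ω → E} (hf : Integrable (fun ω => ‖f ω‖ ^ 2) μ) :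
    ∫ ω, ‖(μ[f|m]) ω‖ ^ 2 ∂μ ≤ ∫ ω, ‖f ω‖ ^ 2 ∂μ := by
  simpa only [Real.rpow_two] using
    integral_norm_condExp_rpow_le (m := m) one_le_two (by simpa only [Real.rpow_two] using hf)

theorem sq_norm_integral_le_integral_sq_norm [IsProbabilityMeasure μ] {f : Ω → E}
    (hf : Integrable (fun ω => ‖f ω‖ ^ 2) μ) :
    ‖∫ ω, f ω ∂μ‖ ^ 2 ≤ ∫ ω, ‖f ω‖ ^ 2 ∂μ := by
  simpa [condExp_bot] using integral_sq_norm_condExp_le (m := ⊥) hf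

end MeasureTheory

section betaIndicator

variable {Ω H : Type*} {m0 : MeasurableSpace Ω}
  [NormedAddCommGroup H] [InnerProductSpace ℝ H] [CompleteSpace H]
  {μ : Measure Ω} {Z : Ω → H}

theorem betaIndicator_nonneg [IsProbabilityMeasure μ] (hZ : AEStronglyMeasurable Z μ)
    (hZ2 : Integrable (fun ω => ‖Z ω‖ ^ 2) μ)
    (hden : 0 ≤ (∫ ω, ‖Z ω‖ ^ 2 ∂μ) - ‖∫ ω', Z ω' ∂μ‖ ^ 2)
    {m : MeasurableSpace Ω} (hm : m ≤ m0) : 0 ≤ betaIndicator m0 μ Z m := by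
  have hcond2 : Integrable (fun ω => ‖(μ[Z|m]) ω‖ ^ 2) μ :=
    (((memLp_two_iff_integrable_sq_norm hZ).mpr hZ2).condExp one_le_two).integrable_norm_pow
      two_ne_zero
  have hnum := sq_norm_integral_le_integral_sq_norm hcond2
  rw [integral_condExp hm] at hnum
  exact div_nonneg (sub_nonneg.mpr hnum) hden

theorem betaIndicator_le_one (hZ2 : Integrable (fun ω => ‖Z ω‖ ^ 2) μ)
    (hden : 0 < (∫ ω, ‖Z ω‖ ^ 2 ∂μ) - ‖∫ ω', Z ω' ∂μ‖ ^ 2) (m : MeasurableSpace Ω) :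
    betaIndicator m0 μ Z m ≤ 1 := by
  rw [betaIndicator, div_le_one hden]
  linarith [integral_sq_norm_condExp_le (m := m) hZ2]

theorem betaIndicator_self [SigmaFinite μ] (hZ : Integrable Z μ)
    (hden : (∫ ω, ‖Z ω‖ ^ 2 ∂μ) - ‖∫ ω', Z ω' ∂μ‖ ^ 2 ≠ 0) :
    betaIndicator m0 μ Z m0 = 1 := by
  have : SigmaFinite (μ.trim le_rfl) := by rwa [trim_eq_self]
  have hcond : ∫ ω, ‖(μ[Z|m0]) ω‖ ^ 2 ∂μ = ∫ ω, ‖Z ω‖ ^ 2 ∂μ :=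
    integral_congr_ae <| (condExp_of_aestronglyMeasurable' le_rfl hZ.1 hZ).fun_comp (‖·‖ ^ 2)
  rw [betaIndicator, hcond, div_self hden]

end betaIndicator

theorem betaIndicator_bounds_general
    {Ω H : Type*} [m0 : MeasurableSpace Ω]
    [NormedAddCommGroup H] [InnerProductSpace ℝ H] [CompleteSpace H]
    (μ : Measure Ω) [IsProbabilityMeasure μ]
    (Z : Ω → H) (hZ : Integrable Z μ)
    (hZ2 : Integrable (fun ω => ‖Z ω‖ ^ 2) μ)
    (hden : 0 < (∫ ω, ‖Z ω‖ ^ 2 ∂μ) - ‖∫ ω', Z ω' ∂μ‖ ^ 2)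
    (m : MeasurableSpace Ω) (hm : m ≤ m0) :
    0 ≤ betaIndicator m0 μ Z m ∧ betaIndicator m0 μ Z m ≤ 1 ∧
      betaIndicator m0 μ Z m0 = 1 :=
  ⟨betaIndicator_nonneg hZ.1 hZ2 hden.le hm, betaIndicator_le_one hZ2 hden m,
    betaIndicator_self hZ hden.ne'⟩

/-- **Boundedness of the β^k-indicator.**
On a probability space `(Ω, m0, μ)`, with output feature map `Z ω = k(·,Y(ω))`,
for any sub-σ-algebra `m = σ(X_R) ≤ m0` the β^k-indicator satisfies
`0 ≤ β^k_R ≤ 1`; moreover, since the output `Y = g(X₁,…,Xₙ)` is a deterministic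
function of all the inputs (so `Z` is measurable with respect to the σ-algebra `m0`
generated by the full input set), the β^k of the full input set equals `1`. -/
theorem betaIndicator_bounds
    {Ω H : Type*} [m0 : MeasurableSpace Ω]
    [NormedAddCommGroup H] [InnerProductSpace ℝ H] [CompleteSpace H]
    (μ : Measure Ω) [IsProbabilityMeasure μ]
    (Z : Ω → H) (hZ : Integrable Z μ)
    (hZ2 : Integrable (fun ω => ‖Z ω‖ ^ 2) μ)
    (hZmeas : StronglyMeasurable[m0] Z)
    (hden : 0 < (∫ ω, ‖Z ω‖ ^ 2 ∂μ) - ‖∫ ω', Z ω' ∂μ‖ ^ 2)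
    (m : MeasurableSpace Ω) (hm : m ≤ m0) :
    0 ≤ betaIndicator m0 μ Z m ∧ betaIndicator m0 μ Z m ≤ 1 ∧
      betaIndicator m0 μ Z m0 = 1 :=
  betaIndicator_bounds_general (m0 := m0) μ Z hZ hZ2 hden m hm
end

section
/- The β^k-indicator is monotone under inclusion of input sets: if S ⊆ R ⊆ {1,...,n}, then β^k_S ≤ β^k_R. -/
/-!
By the tower property `μ[Z|m₁] = μ[μ[Z|m₂]|m₁]`, and conditional expectation contracts second
moments (conditional Jensen for `‖·‖²`), so `E‖μ[Z|m₁]‖² ≤ E‖μ[Z|m₂]‖²`. The two indicators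
share the same positive denominator, hence are ordered like their numerators.
-/

open MeasureTheory
open scoped RealInnerProductSpace

namespace MeasureTheory

variable {α E : Type*} [NormedAddCommGroup E] [NormedSpace ℝ E] [CompleteSpace E]
  {m m₁ m₂ m0 : MeasurableSpace α} {μ : Measure α} {f : α → E}

theorem integral_norm_sq_condExp_le (hf : Integrable (‖f ·‖ ^ 2) μ) :
    ∫ x, ‖μ[f | m] x‖ ^ 2 ∂μ ≤ ∫ x, ‖f x‖ ^ 2 ∂μ := by
  simpa only [Real.rpow_two] using
    integral_norm_condExp_rpow_le (m := m) one_le_two (by simpa only [Real.rpow_two] using hf)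

theorem integral_norm_sq_condExp_mono (hf : MemLp f 2 μ) (h12 : m₁ ≤ m₂) (h2 : m₂ ≤ m0)
    [SigmaFinite (μ.trim h2)] :
    ∫ x, ‖μ[f | m₁] x‖ ^ 2 ∂μ ≤ ∫ x, ‖μ[f | m₂] x‖ ^ 2 ∂μ := by
  have hg : Integrable (‖μ[f | m₂] ·‖ ^ 2) μ :=
    (memLp_two_iff_integrable_sq_norm integrable_condExp.1).1 (hf.condExp one_le_two)
  calc ∫ x, ‖μ[f | m₁] x‖ ^ 2 ∂μ = ∫ x, ‖μ[μ[f | m₂] | m₁] x‖ ^ 2 ∂μ :=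
        integral_congr_ae <|
          (condExp_condExp_of_le (f := f) h12 h2).mono fun x hx => by simp only [hx]
    _ ≤ ∫ x, ‖μ[f | m₂] x‖ ^ 2 ∂μ := integral_norm_sq_condExp_le hg

end MeasureTheory

/-- **Monotonicity of the β^k-indicator under inclusion of input sets.**
If `S ⊆ R` then the σ-algebra `m₁` generated by `X_S` is contained in the σ-algebra
`m₂` generated by `X_R`, and `β^k_S ≤ β^k_R`.  (Conditional Jensen:
`E[‖E[Z|m₁]‖²] ≤ E[‖E[Z|m₂]‖²]` for `m₁ ≤ m₂` and `Z = k(·,Y)` Bochner-integrable;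
the common denominator `E[k(Y,Y)] − ‖μ_Y‖²` is assumed positive.) -/
theorem betaIndicator_mono
    {Ω H : Type*} [m0 : MeasurableSpace Ω]
    [NormedAddCommGroup H] [InnerProductSpace ℝ H] [CompleteSpace H]
    (μ : Measure Ω) [IsProbabilityMeasure μ]
    (Z : Ω → H) (hZ : Integrable Z μ)
    (hZ2 : Integrable (fun ω => ‖Z ω‖ ^ 2) μ)
    (hden : 0 < (∫ ω, ‖Z ω‖ ^ 2 ∂μ) - ‖∫ ω', Z ω' ∂μ‖ ^ 2)
    (m₁ m₂ : MeasurableSpace Ω) (h12 : m₁ ≤ m₂) (h2 : m₂ ≤ m0) :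
    betaIndicator m0 μ Z m₁ ≤ betaIndicator m0 μ Z m₂ := by
  have hZmem : MemLp Z 2 μ := (memLp_two_iff_integrable_sq_norm hZ.1).2 hZ2
  unfold betaIndicator
  gcongr (?_ - _) / _
  exact integral_norm_sq_condExp_mono hZmem h12 h2
end

section
/- Conditional decomposition lemma: if X_D = X_S ∪ X_R with X_S ∩ X_R = ∅, then β^k_D = β^k_S + β^k_{R|S}, where the conditional index β^k_{R|S} is defined via the average squared MMD between f_{Y|X_D} and f_{Y|X_S} normalized by E[k(Y,Y)] − E[k(Y,Y')]. -/
open MeasureTheory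
open scoped RealInnerProductSpace

/-! The conditional mean embeddings `μ[Z|m]` are orthogonal projections of `Z` in `L²(μ; H)` onto
the subspaces of `m`-measurable functions. For `mS ≤ mS ⊔ mR` the increment
`μ[Z|mS ⊔ mR] - μ[Z|mS]` is orthogonal to every `mS`-measurable function, in particular to
`μ[Z|mS] - E[Z]`, so the averaged squared MMDs add up by Pythagoras. -/

namespace MeasureTheory

variable {α E : Type*} [NormedAddCommGroup E] [InnerProductSpace ℝ E]
  {m₁ m₂ m0 : MeasurableSpace α} {μ : Measure α}

theorem L2.integral_norm_sq (f : α →₂[μ] E) : ∫ a, ‖f a‖ ^ 2 ∂μ = ‖f‖ ^ 2 := by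
  rw [← real_inner_self_eq_norm_sq, L2.inner_def]
  simp only [real_inner_self_eq_norm_sq]

theorem L2.integral_norm_sub_sq {F G : α →₂[μ] E} {f g : α → E} (hF : F =ᵐ[μ] f)
    (hG : G =ᵐ[μ] g) : ∫ a, ‖f a - g a‖ ^ 2 ∂μ = ‖F - G‖ ^ 2 := by
  rw [← L2.integral_norm_sq]
  refine integral_congr_ae ?_
  filter_upwards [hF, hG, Lp.coeFn_sub F G] with a hFa hGa hsub
  rw [hsub, Pi.sub_apply, hFa, hGa]

variable [CompleteSpace E]

theorem inner_condExpL2_sub_condExpL2_eq_zero (hm₁₂ : m₁ ≤ m₂) (hm₂ : m₂ ≤ m0)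
    (f g : α →₂[μ] E) (hg : AEStronglyMeasurable[m₁] g μ) :
    ⟪(condExpL2 E ℝ hm₂ f : α →₂[μ] E) - condExpL2 E ℝ (hm₁₂.trans hm₂) f, g⟫ = 0 := by
  rw [inner_sub_left, inner_condExpL2_eq_inner_fun hm₂ f g (hg.mono hm₁₂),
    inner_condExpL2_eq_inner_fun _ f g hg, sub_self]

theorem norm_condExpL2_sub_sq (hm₁₂ : m₁ ≤ m₂) (hm₂ : m₂ ≤ m0) (f g : α →₂[μ] E)
    (hg : AEStronglyMeasurable[m₁] g μ) :
    ‖(condExpL2 E ℝ hm₂ f : α →₂[μ] E) - g‖ ^ 2 =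
      ‖(condExpL2 E ℝ (hm₁₂.trans hm₂) f : α →₂[μ] E) - g‖ ^ 2 +
        ‖(condExpL2 E ℝ hm₂ f : α →₂[μ] E) - condExpL2 E ℝ (hm₁₂.trans hm₂) f‖ ^ 2 := by
  set P₂ : α →₂[μ] E := (condExpL2 E ℝ hm₂ f : α →₂[μ] E)
  set P₁ : α →₂[μ] E := (condExpL2 E ℝ (hm₁₂.trans hm₂) f : α →₂[μ] E)
  have hP₁g : AEStronglyMeasurable[m₁] (⇑(P₁ - g)) μ :=
    ((aestronglyMeasurable_condExpL2 _ f).sub hg).congr (Lp.coeFn_sub P₁ g).symm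
  have hortho : ⟪P₂ - P₁, P₁ - g⟫ = 0 :=
    inner_condExpL2_sub_condExpL2_eq_zero hm₁₂ hm₂ f _ hP₁g
  rw [show P₂ - g = (P₂ - P₁) + (P₁ - g) by abel, norm_add_sq_real, hortho]
  ring

theorem integral_norm_condExp_sub_sq [IsFiniteMeasure μ] (hm₁₂ : m₁ ≤ m₂) (hm₂ : m₂ ≤ m0)
    {f g : α → E} (hf : MemLp f 2 μ) (hg : MemLp g 2 μ) (hgm : AEStronglyMeasurable[m₁] g μ) :
    ∫ a, ‖μ[f|m₂] a - g a‖ ^ 2 ∂μ =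
      ∫ a, ‖μ[f|m₁] a - g a‖ ^ 2 ∂μ + ∫ a, ‖μ[f|m₂] a - μ[f|m₁] a‖ ^ 2 ∂μ := by
  have hP₂ := hf.condExpL2_ae_eq_condExp (𝕜 := ℝ) hm₂
  have hP₁ := hf.condExpL2_ae_eq_condExp (𝕜 := ℝ) (hm₁₂.trans hm₂)
  rw [L2.integral_norm_sub_sq hP₂ hg.coeFn_toLp, L2.integral_norm_sub_sq hP₁ hg.coeFn_toLp,
    L2.integral_norm_sub_sq hP₂ hP₁]
  exact norm_condExpL2_sub_sq hm₁₂ hm₂ _ _ (hgm.congr hg.coeFn_toLp.symm)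

end MeasureTheory

theorem beta_conditional_decomposition_general
    {Ω H : Type*} [m0 : MeasurableSpace Ω]
    [NormedAddCommGroup H] [InnerProductSpace ℝ H] [CompleteSpace H]
    (μ : Measure Ω) [IsProbabilityMeasure μ]
    (Z : Ω → H) (hZ : Integrable Z μ)
    (hZ2 : Integrable (fun ω => ‖Z ω‖ ^ 2) μ)
    (mS mR : MeasurableSpace Ω) (hS : mS ≤ m0) (hR : mR ≤ m0) :
    (∫ ω, ‖(μ[Z|mS ⊔ mR]) ω - ∫ ω', Z ω' ∂μ‖ ^ 2 ∂μ) /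
        ((∫ ω, ‖Z ω‖ ^ 2 ∂μ) - ‖∫ ω', Z ω' ∂μ‖ ^ 2)
      = (∫ ω, ‖(μ[Z|mS]) ω - ∫ ω', Z ω' ∂μ‖ ^ 2 ∂μ) /
          ((∫ ω, ‖Z ω‖ ^ 2 ∂μ) - ‖∫ ω', Z ω' ∂μ‖ ^ 2)
        + (∫ ω, ‖(μ[Z|mS ⊔ mR]) ω - (μ[Z|mS]) ω‖ ^ 2 ∂μ) /
            ((∫ ω, ‖Z ω‖ ^ 2 ∂μ) - ‖∫ ω', Z ω' ∂μ‖ ^ 2) := by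
  have hZL2 : MemLp Z 2 μ := (memLp_two_iff_integrable_sq_norm hZ.1).mpr hZ2
  rw [← add_div, integral_norm_condExp_sub_sq le_sup_left (sup_le hS hR) hZL2 (memLp_const _)
    aestronglyMeasurable_const]

/-- **Conditional decomposition lemma: `β^k_D = β^k_S + β^k_{R|S}`.**
Work on a probability space `(Ω, m0, μ)` with output feature map `Z ω = k(·,Y(ω))`
(so `μ_Y = ∫ Z dμ`, and `μ[Z|m]` is the conditional mean embedding of the output
given the inputs generating the σ-algebra `m`).  Let `mS, mR` be the σ-algebras
generated by the disjoint input groups `X_S` and `X_R`; then `X_D = X_S ∪ X_R`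
generates `mD = mS ⊔ mR`.  With the normalization `E[k(Y,Y)] − E[k(Y,Y')] =
E[‖Z‖²] − ‖μ_Y‖²` (assumed positive), the averaged squared MMDs satisfy
`β^k_D = β^k_S + β^k_{R|S}` where
`β^k_A = E[‖μ[Z|m_A] − μ_Y‖²]/den` and `β^k_{R|S} = E[‖μ[Z|m_D] − μ[Z|m_S]‖²]/den`. -/
theorem beta_conditional_decomposition
    {Ω H : Type*} [m0 : MeasurableSpace Ω]
    [NormedAddCommGroup H] [InnerProductSpace ℝ H] [CompleteSpace H]
    (μ : Measure Ω) [IsProbabilityMeasure μ]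
    (Z : Ω → H) (hZ : Integrable Z μ)
    (hZ2 : Integrable (fun ω => ‖Z ω‖ ^ 2) μ)
    (mS mR : MeasurableSpace Ω) (hS : mS ≤ m0) (hR : mR ≤ m0)
    (hden : 0 < (∫ ω, ‖Z ω‖ ^ 2 ∂μ) - ‖∫ ω', Z ω' ∂μ‖ ^ 2) :
    (∫ ω, ‖(μ[Z|mS ⊔ mR]) ω - ∫ ω', Z ω' ∂μ‖ ^ 2 ∂μ) /
        ((∫ ω, ‖Z ω‖ ^ 2 ∂μ) - ‖∫ ω', Z ω' ∂μ‖ ^ 2)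
      = (∫ ω, ‖(μ[Z|mS]) ω - ∫ ω', Z ω' ∂μ‖ ^ 2 ∂μ) /
          ((∫ ω, ‖Z ω‖ ^ 2 ∂μ) - ‖∫ ω', Z ω' ∂μ‖ ^ 2)
        + (∫ ω, ‖(μ[Z|mS ⊔ mR]) ω - (μ[Z|mS]) ω‖ ^ 2 ∂μ) /
            ((∫ ω, ‖Z ω‖ ^ 2 ∂μ) - ‖∫ ω', Z ω' ∂μ‖ ^ 2) :=
  beta_conditional_decomposition_general (m0 := m0) μ Z hZ hZ2 mS mR hS hR
end

section
/- For the linear output kernel k(y,y') = y·y' on ℝ, the kernel sensitivity index reduces to the variance-based (Sobol-type) first-order index: β^k_R = Var(E[Y | X_R]) / Var(Y), assuming 0 < Var(Y) < ∞. -/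
open MeasureTheory ProbabilityTheory

lemma memLp_two_condexp_aux
    {Ω : Type*} [m0 : MeasurableSpace Ω]
    (μ : Measure Ω) [IsProbabilityMeasure μ]
    (Yout : Ω → ℝ) (hY2 : MemLp Yout 2 μ)
    (m : MeasurableSpace Ω) (hm : m ≤ m0) :
    MemLp (μ[Yout|m]) 2 μ := by
  haveI : SigmaFinite (μ.trim hm) := inferInstance
  set g : Ω → ℝ := (condExpL2 ℝ ℝ hm (hY2.toLp Yout) : Ω → ℝ) with hg
  have hae : g =ᵐ[μ] μ[Yout|m] := by
    refine ae_eq_condExp_of_forall_setIntegral_eq hm (hY2.integrable one_le_two)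
      (fun s _ hμs => integrableOn_condExpL2_of_measure_ne_top hm hμs.ne _)
      (fun s hs hμs => ?_)
      (aestronglyMeasurable_condExpL2 hm _)
    rw [integral_condExpL2_eq hm (hY2.toLp Yout) hs hμs.ne]
    exact integral_congr_ae (ae_restrict_of_ae hY2.coeFn_toLp)
  exact (Lp.memLp _).ae_eq hae

/-- **The linear kernel recovers the variance-based (Sobol) first-order index.**
With the linear output kernel `k(y,y') = y·y'` on `ℝ`,
`β^k_R = (E_{X_R}[E[k(Y,Y')|X_R]] − E[k(Y,Y')]) / (E[k(Y,Y)] − E[k(Y,Y')])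
       = (E[(E[Y|X_R])²] − (E[Y])²) / (E[Y²] − (E[Y])²)`,
where `m = σ(X_R)` is the sub-σ-algebra generated by the inputs `X_R` and
`E[Y|X_R]` is the conditional expectation `μ[Y|m]`.  Assuming
`0 < Var(Y) < ∞` (i.e. `Y` square-integrable with positive variance), this equals
the Sobol-type index `Var(E[Y|X_R]) / Var(Y)`. -/
theorem linear_kernel_gives_variance_index
    {Ω : Type*} [m0 : MeasurableSpace Ω]
    (μ : Measure Ω) [IsProbabilityMeasure μ]
    (Yout : Ω → ℝ) (hY2 : MemLp Yout 2 μ)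
    (m : MeasurableSpace Ω) (hm : m ≤ m0)
    (hvar : 0 < variance Yout μ) :
    ((∫ ω, ((μ[Yout|m]) ω) ^ 2 ∂μ) - (∫ ω, Yout ω ∂μ) ^ 2) /
        ((∫ ω, (Yout ω) ^ 2 ∂μ) - (∫ ω, Yout ω ∂μ) ^ 2)
      = variance (μ[Yout|m]) μ / variance Yout μ := by
  haveI : SigmaFinite (μ.trim hm) := inferInstance
  have hcond2 : MemLp (μ[Yout|m]) 2 μ := @memLp_two_condexp_aux Ω m0 μ ‹_› Yout hY2 m hm
  have hint : ∫ ω, (μ[Yout|m]) ω ∂μ = ∫ ω, Yout ω ∂μ := integral_condExp hm (f := Yout)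
  rw [variance_eq_sub hY2, variance_eq_sub hcond2, hint]
  simp [Pi.pow_apply]
end
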